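/- arXiv:2605.03274 — 7 statements merged into one kernel-verified Lean document; each statement's English description precedes it below -/
import Mathlib

section
/- Let p be a prime, let Tr : GF(p^3) → GF(p) denote the algebra trace, and let F denote the image of the algebra map from GF(p) into GF(p^3). Suppose u, v, w, x are nonzero elements of the kernel of Tr and α is a nonzero element of F such that u·v = α·(w·x) in GF(p^3). Then either both u·w⁻¹ ∈ F and v·x⁻¹ ∈ F, or both u·x⁻¹ ∈ F and v·w⁻¹ ∈ F; equivalently, the cosets of u, v equal the cosets of w, x in some order in the quotient group GF(p^3)^× / GF(p)^×. -/
/-!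
The kernel `V` of the trace is a plane. If `u` and `w` are proportional, cancelling `w` gives the
first alternative. Otherwise they span `V`, so `v = a w + b u` and `x = c w + d u`, and
`u v = α w x` makes `u / w` a root of `b X² + (a - α d) X - α c`. Since `u / w` is not a scalar
and its minimal polynomial has degree dividing the odd number `[GF(p³) : GF(p)] = 3`, it satisfies
no nonzero quadratic; hence `b = c = 0`, i.e. `v = a w` and `x = d u`.
-/

open Polynomial Module

theorem Submodule.span_pair_eq_of_finrank_le_two {K M : Type*} [DivisionRing K] [AddCommGroup M]
    [Module K M] [FiniteDimensional K M] {V : Submodule K M} (hV : finrank K V ≤ 2) {w u : M}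
    (hw : w ∈ V) (hu : u ∈ V) (hind : LinearIndependent K ![w, u]) :
    span K {w, u} = V := by
  refine eq_of_le_of_finrank_le
    (span_le.mpr (Set.insert_subset hw (Set.singleton_subset_iff.mpr hu))) ?_
  have h2 := finrank_span_eq_card hind
  rw [Matrix.range_cons_cons_empty, Fintype.card_fin] at h2
  omega

theorem finrank_ker_trace_add_one {K L : Type*} [Field K] [Field L] [Algebra K L]
    [FiniteDimensional K L] [Algebra.IsSeparable K L] :
    finrank K (LinearMap.ker (Algebra.trace K L)) + 1 = finrank K L := by
  rw [← LinearMap.finrank_range_add_finrank_ker (Algebra.trace K L),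
    LinearMap.range_eq_top.mpr (Algebra.trace_surjective K L), finrank_top, finrank_self, add_comm]

section

variable {K L : Type*} [Field K] [Field L] [Algebra K L] [FiniteDimensional K L]

theorem mem_range_algebraMap_of_aeval_eq_zero (hL : Odd (finrank K L)) {β : L} {q : K[X]}
    (hq0 : q ≠ 0) (hq : q.natDegree ≤ 2) (hβ : aeval β q = 0) :
    β ∈ Set.range (algebraMap K L) := by
  have hint : IsIntegral K β := .of_finite K β
  have hle : (minpoly K β).natDegree ≤ 2 :=
    (natDegree_le_natDegree (minpoly.degree_le_of_ne_zero K β hq0 hβ)).trans hq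
  have hne : (minpoly K β).natDegree ≠ 2 := fun h2 =>
    Nat.not_even_iff_odd.mpr hL (even_iff_two_dvd.mpr (h2 ▸ minpoly.degree_dvd hint))
  have hpos := minpoly.natDegree_pos hint
  exact minpoly.natDegree_eq_one_iff.mp (by omega)

theorem eq_zero_of_smul_sq_add_smul_mul_add_smul_sq_eq_zero (hL : Odd (finrank K L)) {u w : L}
    (hind : LinearIndependent K ![w, u]) {a b c : K}
    (h : a • u ^ 2 + b • (u * w) + c • w ^ 2 = 0) : a = 0 ∧ b = 0 ∧ c = 0 := by
  have hw0 : w ≠ 0 := hind.ne_zero 0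
  have hβ : u / w ∉ Set.range (algebraMap K L) := by
    rintro ⟨k, hk⟩
    refine (LinearIndependent.pair_iff' hw0).mp hind k ?_
    rw [Algebra.smul_def, hk, div_mul_cancel₀ u hw0]
  have hq : C a * X ^ 2 + C b * X + C c = 0 := by
    by_contra hq0
    refine hβ (mem_range_algebraMap_of_aeval_eq_zero hL hq0 natDegree_quadratic_le ?_)
    simp only [Algebra.smul_def] at h
    simp only [map_add, map_mul, aeval_C, aeval_X, map_pow]
    field_simp
    linear_combination h
  refine ⟨?_, ?_, ?_⟩
  · simpa using congrArg (coeff · 2) hq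
  · simpa using congrArg (coeff · 1) hq
  · simpa using congrArg (coeff · 0) hq

theorem mul_inv_mem_range_algebraMap_of_mul_eq_smul_mul (hL : Odd (finrank K L))
    {V : Submodule K L} (hV : finrank K V ≤ 2) {u v w x : L} (hu : u ∈ V) (hv : v ∈ V)
    (hw : w ∈ V) (hx : x ∈ V) (hu0 : u ≠ 0) (hw0 : w ≠ 0) (hx0 : x ≠ 0) {α : K} (hα0 : α ≠ 0)
    (h : u * v = α • (w * x)) :
    (u * w⁻¹ ∈ Set.range (algebraMap K L) ∧ v * x⁻¹ ∈ Set.range (algebraMap K L)) ∨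
      (u * x⁻¹ ∈ Set.range (algebraMap K L) ∧ v * w⁻¹ ∈ Set.range (algebraMap K L)) := by
  by_cases hind : LinearIndependent K ![w, u]
  · have hspan := Submodule.span_pair_eq_of_finrank_le_two hV hw hu hind
    obtain ⟨a, b, rfl⟩ := Submodule.mem_span_pair.mp (hspan ▸ hv)
    obtain ⟨c, d, rfl⟩ := Submodule.mem_span_pair.mp (hspan ▸ hx)
    have hquad : b • u ^ 2 + (a - α * d) • (u * w) + (-(α * c)) • w ^ 2 = 0 := by
      simp only [Algebra.smul_def, map_sub, map_mul, map_neg] at h ⊢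
      linear_combination h
    obtain ⟨rfl, -, hc⟩ := eq_zero_of_smul_sq_add_smul_mul_add_smul_sq_eq_zero hL hind hquad
    obtain rfl : c = 0 := by simpa [hα0] using hc
    right
    refine ⟨⟨d⁻¹, ?_⟩, ⟨a, ?_⟩⟩
    · simp [Algebra.smul_def, hu0]
    · simp [Algebra.smul_def, hw0]
  · obtain ⟨c, rfl⟩ : ∃ c : K, c • w = u := by
      simpa [LinearIndependent.pair_iff' hw0] using hind
    have hc0 : c ≠ 0 := by rintro rfl; simp at hu0
    have hv : v = (c⁻¹ * α) • x := by
      rw [mul_smul, eq_inv_smul_iff₀ hc0]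
      refine mul_left_cancel₀ hw0 ?_
      rw [mul_smul_comm, mul_smul_comm, ← h, smul_mul_assoc]
    left
    refine ⟨⟨c, ?_⟩, ⟨c⁻¹ * α, ?_⟩⟩
    · simp [Algebra.smul_def, hw0]
    · simp [hv, Algebra.smul_def, hx0]

end

theorem singer_quotient_sidon_general (p : ℕ) [Fact p.Prime]
    (u v w x α : GaloisField p 3)
    (hu : u ∈ LinearMap.ker (Algebra.trace (ZMod p) (GaloisField p 3)))
    (hv : v ∈ LinearMap.ker (Algebra.trace (ZMod p) (GaloisField p 3)))
    (hw : w ∈ LinearMap.ker (Algebra.trace (ZMod p) (GaloisField p 3)))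
    (hx : x ∈ LinearMap.ker (Algebra.trace (ZMod p) (GaloisField p 3)))
    (hu0 : u ≠ 0) (hw0 : w ≠ 0) (hx0 : x ≠ 0)
    (hα : α ∈ Set.range (algebraMap (ZMod p) (GaloisField p 3))) (hα0 : α ≠ 0)
    (h : u * v = α * (w * x)) :
    (u * w⁻¹ ∈ Set.range (algebraMap (ZMod p) (GaloisField p 3)) ∧
      v * x⁻¹ ∈ Set.range (algebraMap (ZMod p) (GaloisField p 3))) ∨
    (u * x⁻¹ ∈ Set.range (algebraMap (ZMod p) (GaloisField p 3)) ∧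
      v * w⁻¹ ∈ Set.range (algebraMap (ZMod p) (GaloisField p 3))) := by
  have hdeg : finrank (ZMod p) (GaloisField p 3) = 3 := GaloisField.finrank p three_ne_zero
  have hker := finrank_ker_trace_add_one (K := ZMod p) (L := GaloisField p 3)
  obtain ⟨e, rfl⟩ := hα
  refine mul_inv_mem_range_algebraMap_of_mul_eq_smul_mul ⟨1, hdeg⟩
    (by omega) hu hv hw hx hu0 hw0 hx0 (α := e) ?_ ?_
  · rintro rfl; simp at hα0
  · rwa [Algebra.smul_def]

/-- Singer quotient Sidon property: if `u, v, w, x` are nonzero elements of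
the kernel of the trace `Tr : GF(p^3) → GF(p)` and `α` is a nonzero element of
the embedded base field `F = range (algebraMap (ZMod p) (GaloisField p 3))`
with `u * v = α * (w * x)`, then the cosets of `u, v` equal the cosets of
`w, x` in some order: either `u * w⁻¹ ∈ F` and `v * x⁻¹ ∈ F`, or
`u * x⁻¹ ∈ F` and `v * w⁻¹ ∈ F`. -/
theorem singer_quotient_sidon (p : ℕ) [Fact p.Prime]
    (u v w x α : GaloisField p 3)
    (hu : u ∈ LinearMap.ker (Algebra.trace (ZMod p) (GaloisField p 3)))
    (hv : v ∈ LinearMap.ker (Algebra.trace (ZMod p) (GaloisField p 3)))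
    (hw : w ∈ LinearMap.ker (Algebra.trace (ZMod p) (GaloisField p 3)))
    (hx : x ∈ LinearMap.ker (Algebra.trace (ZMod p) (GaloisField p 3)))
    (hu0 : u ≠ 0) (hv0 : v ≠ 0) (hw0 : w ≠ 0) (hx0 : x ≠ 0)
    (hα : α ∈ Set.range (algebraMap (ZMod p) (GaloisField p 3))) (hα0 : α ≠ 0)
    (h : u * v = α * (w * x)) :
    (u * w⁻¹ ∈ Set.range (algebraMap (ZMod p) (GaloisField p 3)) ∧
      v * x⁻¹ ∈ Set.range (algebraMap (ZMod p) (GaloisField p 3))) ∨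
    (u * x⁻¹ ∈ Set.range (algebraMap (ZMod p) (GaloisField p 3)) ∧
      v * w⁻¹ ∈ Set.range (algebraMap (ZMod p) (GaloisField p 3))) :=
  singer_quotient_sidon_general p u v w x α hu hv hw hx hu0 hw0 hx0 hα hα0 h
end

section
/- For every prime p, there exists a finite set S of integers with |S| = p + 1 such that S is Sidon modulo p² + p + 1. -/
/-!
Singer's construction. Let `K = 𝔽_q` and `L = 𝔽_{q³}`. The points of the projective plane
`ℙ(L)` form the cyclic group `Lˣ / Kˣ` of order `q² + q + 1`, and a line `ℙ(W)`, for a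
2-dimensional `K`-subspace `W`, has `q + 1` points. The line is a Sidon set: if
`w₁ w₂ = c w₃ w₄` with `c ∈ K` and `w₂, w₄` not proportional, then `β = w₁ / w₄` maps
`W = span {w₂, w₄}` into itself, and since `[L : K] = 3` is prime the only elements stabilizing
a proper nonzero subspace are the scalars, so `w₁` and `w₄` are proportional. Discrete
logarithms with respect to a generator of `Lˣ / Kˣ` turn this line into a Sidon set modulo
`q² + q + 1`.
-/

/-- `A` is Sidon modulo `M`: if `M ∣ (a + b) - (c + d)` with `a, b, c, d ∈ A`,
then `{a, b} = {c, d}` as unordered pairs. -/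
def IsSidonMod (M : ℤ) (A : Finset ℤ) : Prop :=
  ∀ a ∈ A, ∀ b ∈ A, ∀ c ∈ A, ∀ d ∈ A,
    M ∣ (a + b) - (c + d) → (a = c ∧ b = d) ∨ (a = d ∧ b = c)

open Module

def IsMulSidon {G : Type*} [Mul G] (D : Set G) : Prop :=
  ∀ a ∈ D, ∀ b ∈ D, ∀ c ∈ D, ∀ d ∈ D, a * b = c * d → (a = c ∧ b = d) ∨ (a = d ∧ b = c)

theorem isMulSidon_of_ne_imp_eq {G : Type*} [CommGroup G] {D : Set G}
    (h : ∀ a ∈ D, ∀ b ∈ D, ∀ c ∈ D, ∀ d ∈ D, a * b = c * d → d ≠ b → d = a) :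
    IsMulSidon D := by
  intro a ha b hb c hc d hd habcd
  by_cases hdb : d = b
  · rw [hdb] at habcd
    exact Or.inl ⟨mul_right_cancel habcd, hdb.symm⟩
  · have hda := h a ha b hb c hc d hd habcd hdb
    rw [← hda, mul_comm c] at habcd
    exact Or.inr ⟨hda.symm, mul_left_cancel habcd⟩

section DiscreteLog

variable {G : Type*} [CommGroup G]

open Classical in
noncomputable def discreteLogs (g : G) (D : Set G) : Finset ℤ :=
  ((Finset.range (orderOf g)).filter (fun i => g ^ i ∈ D)).image Nat.cast

theorem isSidonMod_discreteLogs (g : G) {D : Set G} (hD : IsMulSidon D) :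
    IsSidonMod (orderOf g) (discreteLogs g D) := by
  classical
  have hinj := pow_injOn_Iio_orderOf (x := g)
  intro a ha b hb c hc d hd hdvd
  simp only [discreteLogs, Finset.mem_image, Finset.mem_filter, Finset.mem_range] at ha hb hc hd
  obtain ⟨i, ⟨hi, hiD⟩, rfl⟩ := ha
  obtain ⟨j, ⟨hj, hjD⟩, rfl⟩ := hb
  obtain ⟨k, ⟨hk, hkD⟩, rfl⟩ := hc
  obtain ⟨l, ⟨hl, hlD⟩, rfl⟩ := hd
  have hmul : g ^ i * g ^ j = g ^ k * g ^ l := by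
    rw [← pow_add, ← pow_add, pow_eq_pow_iff_modEq, Nat.modEq_iff_dvd, ← dvd_neg, neg_sub]
    exact_mod_cast hdvd
  rcases hD _ hiD _ hjD _ hkD _ hlD hmul with ⟨hik, hjl⟩ | ⟨hil, hjk⟩
  · exact Or.inl ⟨congrArg _ (hinj hi hk hik), congrArg _ (hinj hj hl hjl)⟩
  · exact Or.inr ⟨congrArg _ (hinj hi hl hil), congrArg _ (hinj hj hk hjk)⟩

theorem card_discreteLogs [Finite G] {g : G} (hg : ∀ x, x ∈ Subgroup.zpowers g) (D : Set G) :
    (discreteLogs g D).card = Nat.card D := by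
  classical
  set I := (Finset.range (orderOf g)).filter (fun i => g ^ i ∈ D)
  have himage : (g ^ ·) '' (I : Set ℕ) = D := by
    ext x
    simp only [I, Set.mem_image, Finset.coe_filter, Finset.mem_range, Set.mem_ofPred_eq]
    constructor
    · rintro ⟨i, ⟨-, hi⟩, rfl⟩
      exact hi
    · intro hx
      obtain ⟨n, rfl⟩ := mem_powers_iff_mem_zpowers.mpr (hg x)
      exact ⟨n % orderOf g, ⟨Nat.mod_lt _ (orderOf_pos g), by rwa [pow_mod_orderOf]⟩,
        pow_mod_orderOf g n⟩
  have hinj : Set.InjOn (g ^ ·) (I : Set ℕ) :=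
    pow_injOn_Iio_orderOf.mono fun i hi => by simpa [I] using (Finset.mem_filter.mp hi).1
  rw [discreteLogs, Finset.card_image_of_injective _ Nat.cast_injective, ← Set.ncard_coe_finset,
    ← hinj.ncard_image, himage, Nat.card_coe_set_eq]

end DiscreteLog

theorem QuotientGroup.card_eq_card_subgroup_mul_card_image_mk {G : Type*} [Group G]
    (H : Subgroup G) {s : Set G} (hs : ∀ x ∈ s, ∀ h ∈ H, x * h ∈ s) :
    Nat.card s = Nat.card H * Nat.card ((QuotientGroup.mk : G → G ⧸ H) '' s) := by
  have hsat : QuotientGroup.mk ⁻¹' ((QuotientGroup.mk : G → G ⧸ H) '' s) = s := by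
    rw [QuotientGroup.preimage_image_mk]
    ext x
    simp only [Set.mem_iUnion, Set.mem_preimage]
    exact ⟨fun ⟨h, hxh⟩ => by simpa using hs _ hxh _ (H.inv_mem h.2), fun hx => ⟨1, by simpa⟩⟩
  rw [← Nat.card_prod, ← Nat.card_congr (QuotientGroup.preimageMkEquivSubgroupProdSet H _), hsat]

theorem exists_submodule_finrank_eq {K V : Type*} [DivisionRing K] [AddCommGroup V] [Module K V]
    {n : ℕ} (hn : n ≤ finrank K V) : ∃ W : Submodule K V, finrank K W = n := by
  obtain ⟨f, hf⟩ := exists_linearIndependent_of_le_finrank hn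
  exact ⟨_, (finrank_span_eq_card hf).trans (Fintype.card_fin n)⟩

section FieldExtension

variable {K L : Type*} [Field K] [Field L] [Algebra K L]

def Submodule.mulStabilizer (W : Submodule K L) : Subalgebra K L where
  carrier := {x | ∀ w ∈ W, x * w ∈ W}
  mul_mem' hx hy w hw := by rw [mul_assoc]; exact hx _ (hy w hw)
  add_mem' hx hy w hw := by rw [add_mul]; exact W.add_mem (hx w hw) (hy w hw)
  algebraMap_mem' c w hw := by rw [← Algebra.smul_def]; exact W.smul_mem c hw

theorem mem_bot_of_forall_mul_mem (hp : (finrank K L).Prime) {W : Submodule K L}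
    (hW₀ : W ≠ ⊥) (hW₁ : W ≠ ⊤) {β : L} (hβ : ∀ w ∈ W, β * w ∈ W) :
    β ∈ (⊥ : Subalgebra K L) := by
  have := Subalgebra.isSimpleOrder_of_finrank_prime K L hp
  rcases eq_bot_or_eq_top W.mulStabilizer with h | h
  · exact h ▸ hβ
  · obtain ⟨w, hw, hw₀⟩ := W.ne_bot_iff.mp hW₀
    refine absurd (eq_top_iff.mpr fun y _ => ?_) hW₁
    have hy : y / w ∈ W.mulStabilizer := h ▸ Algebra.mem_top
    simpa [hw₀] using hy w hw

theorem inv_mul_mem_bot_of_mul_eq (hL : finrank K L = 3) {W : Submodule K L}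
    (hW : finrank K W = 2) {w₁ w₂ w₃ w₄ c : L} (h₁ : w₁ ∈ W) (h₂ : w₂ ∈ W) (h₃ : w₃ ∈ W)
    (h₄ : w₄ ∈ W) (h₂₄ : w₄⁻¹ * w₂ ∉ (⊥ : Subalgebra K L)) (hc : c ∈ (⊥ : Subalgebra K L))
    (h : w₁ * w₂ = c * (w₃ * w₄)) :
    w₄⁻¹ * w₁ ∈ (⊥ : Subalgebra K L) := by
  have hw₄ : w₄ ≠ 0 := by
    rintro rfl
    simp at h₂₄
  have hind : LinearIndependent K ![w₄, w₂] := by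
    refine (LinearIndependent.pair_iff' hw₄).mpr fun a ha => h₂₄ ?_
    rw [← ha, mul_smul_comm, inv_mul_cancel₀ hw₄, Algebra.smul_def, mul_one]
    exact Subalgebra.algebraMap_mem _ a
  have : Module.Finite K L := Module.finite_of_finrank_eq_succ hL
  have hspan : Submodule.span K {w₄, w₂} = W := by
    refine Submodule.eq_of_le_of_finrank_le ?_ ?_
    · rw [Submodule.span_le, Set.insert_subset_iff, Set.singleton_subset_iff]
      exact ⟨h₄, h₂⟩
    · have := finrank_span_eq_card hind
      rw [Matrix.range_cons_cons_empty, Fintype.card_fin] at this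
      rw [this, hW]
  obtain ⟨k, rfl⟩ := Algebra.mem_bot.mp hc
  refine mem_bot_of_forall_mul_mem (by rw [hL]; exact Nat.prime_three)
    (W.ne_bot_iff.mpr ⟨w₄, h₄, hw₄⟩) ?_ fun w hw => ?_
  · rintro rfl
    rw [finrank_top, hL] at hW
    omega
  · rw [← hspan] at hw
    obtain ⟨a, b, rfl⟩ := Submodule.mem_span_pair.mp hw
    have : w₄⁻¹ * w₁ * (a • w₄ + b • w₂) = a • w₁ + (b * k) • w₃ := by
      simp only [Algebra.smul_def, map_mul]
      field_simp
      linear_combination (algebraMap K L b) * h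
    rw [this]
    exact W.add_mem (W.smul_mem a h₁) (W.smul_mem _ h₃)

end FieldExtension

section ProjectivePlane

variable (K L : Type*) [Field K] [Field L] [Algebra K L]

abbrev scalarUnits : Subgroup Lˣ := (Units.map (algebraMap K L : K →* L)).range

variable {K L}

theorem mem_scalarUnits_iff {u : Lˣ} : u ∈ scalarUnits K L ↔ (u : L) ∈ (⊥ : Subalgebra K L) := by
  rw [Algebra.mem_bot]
  constructor
  · rintro ⟨v, rfl⟩
    exact ⟨v, rfl⟩
  · rintro ⟨c, hc⟩
    have hc₀ : c ≠ 0 := by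
      rintro rfl
      exact u.ne_zero (by rw [← hc, map_zero])
    exact ⟨Units.mk0 c hc₀, Units.ext hc⟩

theorem card_scalarUnits : Nat.card (scalarUnits K L) = Nat.card K - 1 := by
  rw [← Nat.card_units K]
  exact Nat.card_congr
    (MonoidHom.ofInjective (Units.map_injective (algebraMap K L).injective)).toEquiv.symm

/-- The points of the projective line `ℙ(W)`, inside the group `Lˣ / Kˣ` of points of `ℙ(L)`. -/
def projLine (W : Submodule K L) : Set (Lˣ ⧸ scalarUnits K L) :=
  QuotientGroup.mk '' {u : Lˣ | (u : L) ∈ W}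

theorem isMulSidon_projLine (hL : finrank K L = 3) {W : Submodule K L} (hW : finrank K W = 2) :
    IsMulSidon (projLine W) := by
  refine isMulSidon_of_ne_imp_eq (G := Lˣ ⧸ scalarUnits K L) ?_
  rintro _ ⟨u₁, h₁, rfl⟩ _ ⟨u₂, h₂, rfl⟩ _ ⟨u₃, h₃, rfl⟩ _ ⟨u₄, h₄, rfl⟩ h h₂₄
  rw [← QuotientGroup.mk_mul, ← QuotientGroup.mk_mul, eq_comm, QuotientGroup.eq,
    mem_scalarUnits_iff] at h
  rw [Ne, QuotientGroup.eq, mem_scalarUnits_iff] at h₂₄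
  rw [QuotientGroup.eq, mem_scalarUnits_iff]
  simpa using inv_mul_mem_bot_of_mul_eq hL hW h₁ h₂ h₃ h₄ (by simpa using h₂₄) h
    (by push_cast; field_simp)

end ProjectivePlane

section Counting

variable {K L : Type*} [Field K] [Finite K] [Field L] [Algebra K L]

theorem card_quotient_scalarUnits (hL : finrank K L = 3) :
    Nat.card (Lˣ ⧸ scalarUnits K L) = Nat.card K ^ 2 + Nat.card K + 1 := by
  have : Module.Finite K L := Module.finite_of_finrank_eq_succ hL
  have hq : 1 < Nat.card K := Finite.one_lt_card
  have h := Subgroup.card_eq_card_quotient_mul_card_subgroup (scalarUnits K L)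
  rw [Nat.card_units, natCard_eq_pow_finrank (K := K), hL, card_scalarUnits] at h
  refine Nat.eq_of_mul_eq_mul_right (Nat.sub_pos_of_lt hq) (h.symm.trans ?_)
  zify [hq.le, Nat.one_le_pow 3 (Nat.card K) (by omega)]
  ring

theorem card_projLine {W : Submodule K L} (hW : finrank K W = 2) :
    Nat.card (projLine W) = Nat.card K + 1 := by
  have : Module.Finite K W := Module.finite_of_finrank_eq_succ hW
  have hq : 1 < Nat.card K := Finite.one_lt_card
  set T : Set Lˣ := {u | (u : L) ∈ W}
  have hT : Units.val '' T = (W : Set L) \ {0} := by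
    ext x
    constructor
    · rintro ⟨u, hu, rfl⟩
      exact ⟨hu, u.ne_zero⟩
    · rintro ⟨hx, hx₀⟩
      exact ⟨Units.mk0 x hx₀, hx, rfl⟩
  have hcardT : Nat.card T = Nat.card K ^ 2 - 1 := by
    rw [Nat.card_coe_set_eq, ← Set.ncard_image_of_injective _ Units.val_injective, hT,
      Set.ncard_sdiff_singleton_of_mem W.zero_mem, ← Nat.card_coe_set_eq, SetLike.coe_sort_coe,
      natCard_eq_pow_finrank (K := K), hW]
  have hsat : ∀ u ∈ T, ∀ h ∈ scalarUnits K L, u * h ∈ T := by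
    rintro u hu _ ⟨c, rfl⟩
    show (u : L) * algebraMap K L c ∈ W
    rw [mul_comm, ← Algebra.smul_def]
    exact W.smul_mem _ hu
  have h := QuotientGroup.card_eq_card_subgroup_mul_card_image_mk _ hsat
  rw [hcardT, card_scalarUnits] at h
  refine Nat.eq_of_mul_eq_mul_left (Nat.sub_pos_of_lt hq) (h.symm.trans ?_)
  zify [hq.le, Nat.one_le_pow 2 (Nat.card K) (by omega)]
  ring

end Counting

theorem exists_isSidonMod_card_eq {K L : Type*} [Field K] [Finite K] [Field L] [Algebra K L]
    (hL : finrank K L = 3) :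
    ∃ S : Finset ℤ, IsSidonMod ((Nat.card K : ℤ) ^ 2 + Nat.card K + 1) S ∧
      S.card = Nat.card K + 1 := by
  have : Module.Finite K L := Module.finite_of_finrank_eq_succ hL
  have : Finite L := Module.finite_of_finite K
  obtain ⟨W, hW⟩ := exists_submodule_finrank_eq (K := K) (V := L) (n := 2) (by omega)
  have : IsCyclic (Lˣ ⧸ scalarUnits K L) :=
    isCyclic_of_surjective _ (QuotientGroup.mk'_surjective _)
  obtain ⟨g, hg⟩ := IsCyclic.exists_generator (α := Lˣ ⧸ scalarUnits K L)
  have hord : orderOf g = Nat.card K ^ 2 + Nat.card K + 1 := by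
    rw [orderOf_eq_card_of_forall_mem_zpowers hg, card_quotient_scalarUnits hL]
  refine ⟨discreteLogs g (projLine W), ?_, ?_⟩
  · simpa [hord] using isSidonMod_discreteLogs g (isMulSidon_projLine hL hW)
  · rw [card_discreteLogs hg, card_projLine hW]

/-- Singer's theorem (prime case): for every prime `p` there is a set of
`p + 1` integers that is Sidon modulo `p² + p + 1`. -/
theorem singer_sidon_set (p : ℕ) (hp : p.Prime) :
    ∃ S : Finset ℤ, IsSidonMod ((p : ℤ) ^ 2 + p + 1) S ∧ S.card = p + 1 := by
  have : Fact p.Prime := ⟨hp⟩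
  simpa using
    exists_isSidonMod_card_eq (K := ZMod p) (GaloisField.finrank p (by norm_num : 3 ≠ 0))
end

section
/- Let M and N be integers with 0 < N ≤ M, and let S be a finite set of integers that is Sidon modulo M. Then there exists a finite Sidon set A ⊆ {1, …, N} with |A| ≥ ⌈|S|·N / M⌉. (Proof idea: for each offset u ∈ {0, …, M−1} the cyclic window of length N starting at u captures, summed over all u, exactly |S|·N memberships, so some window captures at least ⌈|S|·N/M⌉ elements, and the relabeled window is an interval Sidon set.) -/
/-!
Average over the `M` cyclic windows of length `N` modulo `M`: every element of `S` lies in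
exactly `N` of them, so some window contains at least `|S| N / M` elements of `S`. Translating
that window onto `{1, …, N}` is a translation modulo `M`, which keeps the set Sidon modulo `M`,
and a set Sidon modulo `M` is Sidon.
-/

open Finset

def IsSidon (A : Finset ℤ) : Prop :=
  ∀ a ∈ A, ∀ b ∈ A, ∀ c ∈ A, ∀ d ∈ A,
    a + b = c + d → (a = c ∧ b = d) ∨ (a = d ∧ b = c)

namespace IsSidonMod

variable {M : ℤ} {A B : Finset ℤ}

theorem mono (hAB : A ⊆ B) (hB : IsSidonMod M B) : IsSidonMod M A :=
  fun a ha b hb c hc d hd => hB a (hAB ha) b (hAB hb) c (hAB hc) d (hAB hd)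

theorem isSidon (hA : IsSidonMod M A) : IsSidon A := by
  intro a ha b hb c hc d hd h
  exact hA a ha b hb c hc d hd (by simp [h])

theorem eq_of_modEq (hA : IsSidonMod M A) {a b : ℤ} (ha : a ∈ A) (hb : b ∈ A)
    (h : a ≡ b [ZMOD M]) : a = b := by
  have hdvd : M ∣ (b + a) - (a + a) := by simpa using h.dvd
  rcases hA b hb a ha a ha a ha hdvd with ⟨hba, -⟩ | ⟨hba, -⟩ <;> exact hba.symm

theorem image_of_modEq (hA : IsSidonMod M A) {f : ℤ → ℤ} {c : ℤ}
    (hf : ∀ x, f x ≡ x + c [ZMOD M]) : IsSidonMod M (A.image f) := by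
  simp only [IsSidonMod, mem_image, forall_exists_index, and_imp]
  rintro _ x hx rfl _ y hy rfl _ z hz rfl _ w hw rfl h
  have hsum : (f x + f y) - (f z + f w) ≡ (x + y) - (z + w) [ZMOD M] := by
    have := ((hf x).add (hf y)).sub ((hf z).add (hf w))
    rwa [show x + c + (y + c) - (z + c + (w + c)) = x + y - (z + w) by ring] at this
  have hdvd : M ∣ (x + y) - (z + w) :=
    Int.modEq_zero_iff_dvd.1 (hsum.symm.trans (Int.modEq_zero_iff_dvd.2 h))
  rcases hA x hx y hy z hz w hw hdvd with ⟨rfl, rfl⟩ | ⟨rfl, rfl⟩ <;> simp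

theorem card_image_of_modEq (hA : IsSidonMod M A) {f : ℤ → ℤ} {c : ℤ}
    (hf : ∀ x, f x ≡ x + c [ZMOD M]) : #(A.image f) = #A := by
  refine card_image_of_injOn fun x hx y hy hxy => hA.eq_of_modEq hx hy ?_
  exact ((hf x).symm.trans (hxy ▸ hf y)).add_right_cancel' c

end IsSidonMod

/-- `u ↦ (s - u) % M` is an involution of `[0, M)`. -/
theorem card_filter_emod_sub (M s : ℤ) (p : ℤ → Prop) [DecidablePred p] :
    #{u ∈ Ico 0 M | p ((s - u) % M)} = #{u ∈ Ico 0 M | p u} := by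
  have hinv : ∀ u ∈ Ico 0 M, (s - (s - u) % M) % M = u := by
    intro u hu
    rw [mem_Ico] at hu
    rw [Int.sub_emod, Int.emod_emod, ← Int.sub_emod, sub_sub_cancel,
      Int.emod_eq_of_lt hu.1 hu.2]
  have hmem : ∀ u ∈ Ico 0 M, (s - u) % M ∈ Ico 0 M := by
    intro u hu
    rw [mem_Ico] at hu ⊢
    exact ⟨Int.emod_nonneg _ (by omega), Int.emod_lt_of_pos _ (by omega)⟩
  refine card_nbij' (fun u => (s - u) % M) (fun u => (s - u) % M) ?_ ?_ ?_ ?_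
  · intro u hu
    rw [mem_coe, mem_filter] at hu ⊢
    exact ⟨hmem u hu.1, hu.2⟩
  · intro u hu
    rw [mem_coe, mem_filter] at hu ⊢
    exact ⟨hmem u hu.1, (hinv u hu.1).symm ▸ hu.2⟩
  · exact fun u hu => hinv u (mem_filter.1 hu).1
  · exact fun u hu => hinv u (mem_filter.1 hu).1

/-- The elements of `S` lying in the cyclic window `u, u + 1, …, u + N - 1` modulo `M`,
translated into `{1, …, N}`. -/
def cyclicWindow (M N u : ℤ) (S : Finset ℤ) : Finset ℤ :=
  {s ∈ S | (s - u) % M < N}.image fun s => (s - u) % M + 1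

theorem cyclicWindow_subset_Icc {M : ℤ} (hM : M ≠ 0) (N u : ℤ) (S : Finset ℤ) :
    cyclicWindow M N u S ⊆ Icc 1 N := by
  intro a ha
  obtain ⟨s, hs, rfl⟩ := mem_image.1 ha
  have hlt := (mem_filter.1 hs).2
  have hnonneg := Int.emod_nonneg (s - u) hM
  rw [mem_Icc]
  omega

theorem emod_sub_add_one_modEq (M u x : ℤ) : (x - u) % M + 1 ≡ x + (1 - u) [ZMOD M] := by
  have := (Int.mod_modEq (x - u) M).add_right 1
  rwa [show x - u + 1 = x + (1 - u) by ring] at this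

namespace IsSidonMod

variable {M : ℤ} {S : Finset ℤ}

theorem isSidon_cyclicWindow (hS : IsSidonMod M S) (N u : ℤ) :
    IsSidon (cyclicWindow M N u S) :=
  ((hS.mono (filter_subset _ _)).image_of_modEq (emod_sub_add_one_modEq M u)).isSidon

theorem sum_card_cyclicWindow (hS : IsSidonMod M S) {N : ℤ} (hNM : N ≤ M) :
    ∑ u ∈ Ico 0 M, #(cyclicWindow M N u S) = #S * N.toNat := by
  set r : ℤ → ℤ → Prop := fun u s => (s - u) % M < N
  calc ∑ u ∈ Ico 0 M, #(cyclicWindow M N u S)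
      = ∑ u ∈ Ico 0 M, #(S.bipartiteAbove r u) :=
        sum_congr rfl fun u _ =>
          (hS.mono (filter_subset _ _)).card_image_of_modEq (emod_sub_add_one_modEq M u)
    _ = ∑ s ∈ S, #((Ico 0 M).bipartiteBelow r s) :=
        sum_card_bipartiteAbove_eq_sum_card_bipartiteBelow r
    _ = ∑ s ∈ S, N.toNat := sum_congr rfl fun s _ => by
        rw [bipartiteBelow, card_filter_emod_sub M s (· < N), Ico_filter_lt,
          min_eq_right hNM, Int.card_Ico, sub_zero]
    _ = #S * N.toNat := by rw [sum_const, smul_eq_mul]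

end IsSidonMod

/-- Window averaging: from a set Sidon modulo `M` and a window length
`0 < N ≤ M`, one obtains an interval Sidon set in `{1, …, N}` of cardinality
at least `⌈|S| · N / M⌉`. -/
theorem exists_large_intervalSidon (M N : ℕ) (hN : 0 < N) (hNM : N ≤ M)
    (S : Finset ℤ) (hS : IsSidonMod (M : ℤ) S) :
    ∃ A : Finset ℤ, A ⊆ Finset.Icc (1 : ℤ) N ∧ IsSidon A ∧
      (A.card : ℤ) ≥ ⌈(S.card * N : ℚ) / M⌉ := by
  have hM : 0 < M := hN.trans_le hNM
  have hsum := hS.sum_card_cyclicWindow (Int.ofNat_le.2 hNM)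
  rw [Int.toNat_natCast] at hsum
  obtain ⟨u, -, hu⟩ : ∃ u ∈ Ico 0 (M : ℤ), #S * N ≤ M * #(cyclicWindow M N u S) := by
    refine exists_le_of_sum_le ⟨0, by simpa using hM⟩ ?_
    rw [sum_const, Int.card_Ico, sub_zero, Int.toNat_natCast, smul_eq_mul, ← mul_sum, hsum]
  refine ⟨cyclicWindow M N u S, cyclicWindow_subset_Icc (by omega) _ _ _,
    hS.isSidon_cyclicWindow _ _, ?_⟩
  rw [ge_iff_le, Int.ceil_le, div_le_iff₀ (by exact_mod_cast hM)]
  exact_mod_cast (mul_comm (M : ℕ) _ ▸ hu)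
end

section
/- Let M be a positive integer and let S be a nonempty finite set of integers that is Sidon modulo M, with s = |S|. Let N be an integer with 0 < N ≤ M and N ≥ M − ⌊(M + s(s−1)/2) / s⌋ + 1, where the divisions are floor (natural-number) divisions. Then there exists a finite Sidon set A ⊆ {1, …, N} with |A| = s. (The cyclic gaps between consecutive residues of S modulo M are pairwise distinct positive integers summing to M, so the largest gap is at least ⌊(M + s(s−1)/2)/s⌋, and deleting a largest gap leaves a cyclic window of length at most N containing all of S.) -/
/-!
Reduce `S` modulo `M` to a Sidon set `T` of `s` residues. For `t ∈ T` let `cyclicGap T t` be the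
distance from `t` to the next element of `T` going around `ZMod M`. The arcs `[t, t + gap)` cover
`ZMod M`, so the gaps sum to at least `M`; they are pairwise distinct because `t + g = u` and
`t' + g = u'` give `u + t' = u' + t`. Distinct naturals with sum at least `M` have a maximum of at
least `⌊(M + s(s-1)/2)/s⌋`. Cutting `ZMod M` open at the largest gap and shifting puts `T` inside
`{1, …, N}`; a translate of a set that is Sidon modulo `M` is still Sidon modulo `M`, hence Sidon.
-/

open Finset

def IsSidonSet {G : Type*} [Add G] (A : Finset G) : Prop :=
  ∀ a ∈ A, ∀ b ∈ A, ∀ c ∈ A, ∀ d ∈ A,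
    a + b = c + d → (a = c ∧ b = d) ∨ (a = d ∧ b = c)

theorem Finset.exists_div_le_of_le_sum {B : Finset ℕ} (hB : B.Nonempty) {m : ℕ}
    (hm : m ≤ ∑ b ∈ B, b) : ∃ b ∈ B, (m + #B * (#B - 1) / 2) / #B ≤ b := by
  refine ⟨B.max' hB, B.max'_mem hB, Nat.div_le_of_le_mul ?_⟩
  have hsum : ∑ b ∈ B, (b : ℤ) ≤ ∑ n ∈ range #B, ((B.max' hB : ℤ) - n) := by
    simpa using sum_le_sum_range (s := B.map Nat.castEmbedding) (c := B.max' hB)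
      (by simpa using fun b hb => B.le_max' b hb)
  have htri := sum_range_id_mul_two #B
  rw [sum_sub_distrib, sum_const, card_range, nsmul_eq_mul] at hsum
  have : ∑ b ∈ B, b + ∑ n ∈ range #B, n ≤ #B * B.max' hB := by
    zify; push_cast at hsum ⊢; linarith
  omega

section Sidon

variable {M : ℕ} {A : Finset ℤ}

theorem isSidonMod_iff_intCast :
    IsSidonMod M A ↔ ∀ a ∈ A, ∀ b ∈ A, ∀ c ∈ A, ∀ d ∈ A,
      (a : ZMod M) + b = c + d → (a = c ∧ b = d) ∨ (a = d ∧ b = c) := by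
  refine forall₄_congr fun a _ b _ => forall₄_congr fun c _ d _ => ?_
  rw [← Int.cast_add, ← Int.cast_add, ZMod.intCast_eq_intCast_iff_dvd_sub, dvd_sub_comm]

theorem IsSidonMod.isSidon_s8 (h : IsSidonMod M A) : IsSidon A :=
  fun a ha b hb c hc d hd habcd => h a ha b hb c hc d hd (by simp [habcd])

theorem IsSidonMod.injOn_intCast (h : IsSidonMod M A) :
    Set.InjOn (Int.cast : ℤ → ZMod M) A := by
  intro a ha b hb hab
  rcases isSidonMod_iff_intCast.mp h a ha a ha b hb a ha (by rw [hab]) with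
    ⟨h', -⟩ | ⟨-, h'⟩ <;> exact h'

theorem IsSidonMod.isSidonSet_image_intCast (h : IsSidonMod M A) :
    IsSidonSet (A.image (Int.cast : ℤ → ZMod M)) := by
  simp only [IsSidonSet, forall_mem_image]
  intro a ha b hb c hc d hd habcd
  rcases isSidonMod_iff_intCast.mp h a ha b hb c hc d hd habcd with ⟨rfl, rfl⟩ | ⟨rfl, rfl⟩
  exacts [Or.inl ⟨rfl, rfl⟩, Or.inr ⟨rfl, rfl⟩]

variable {f : ℤ → ℤ} {c : ZMod M}

theorem IsSidonMod.image_of_intCast_eq_add (h : IsSidonMod M A)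
    (hf : ∀ x, (f x : ZMod M) = x + c) : IsSidonMod M (A.image f) := by
  simp only [isSidonMod_iff_intCast, forall_mem_image, hf]
  intro a ha b hb c hc d hd habcd
  rcases isSidonMod_iff_intCast.mp h a ha b hb c hc d hd (by linear_combination habcd)
    with ⟨rfl, rfl⟩ | ⟨rfl, rfl⟩
  exacts [Or.inl ⟨rfl, rfl⟩, Or.inr ⟨rfl, rfl⟩]

theorem IsSidonMod.card_image_of_intCast_eq_add (h : IsSidonMod M A)
    (hf : ∀ x, (f x : ZMod M) = x + c) : #(A.image f) = #A :=
  card_image_of_injOn fun x hx y hy hxy =>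
    h.injOn_intCast hx hy (by simpa [hf] using congrArg (Int.cast : ℤ → ZMod M) hxy)

end Sidon

namespace ZMod

variable {M : ℕ} {T : Finset (ZMod M)} {t x : ZMod M}

noncomputable def cyclicGap (T : Finset (ZMod M)) (t : ZMod M) : ℕ :=
  sInf {d : ℕ | 0 < d ∧ t + (d : ZMod M) ∈ T}

theorem add_notMem_of_lt_cyclicGap {d : ℕ} (hd : 0 < d) (hdt : d < cyclicGap T t) :
    t + (d : ZMod M) ∉ T :=
  fun h => Nat.notMem_of_lt_sInf hdt ⟨hd, h⟩

theorem cyclicGap_le {d : ℕ} (hd : 0 < d) (h : t + (d : ZMod M) ∈ T) : cyclicGap T t ≤ d :=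
  Nat.sInf_le ⟨hd, h⟩

variable [NeZero M]

theorem cyclicGap_spec (ht : t ∈ T) : 0 < cyclicGap T t ∧ t + cyclicGap T t ∈ T :=
  Nat.sInf_mem (s := {d : ℕ | 0 < d ∧ t + (d : ZMod M) ∈ T})
    ⟨M, NeZero.pos M, by simpa using ht⟩

theorem cyclicGap_lt (hx : x ∈ T) (hxt : x ≠ t) : cyclicGap T t < M :=
  (cyclicGap_le (val_pos.mpr (sub_ne_zero.mpr hxt)) (by simpa using hx)).trans_lt
    (val_lt (x - t))

theorem exists_add_eq_of_lt_cyclicGap (hT : T.Nonempty) (y : ZMod M) :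
    ∃ t ∈ T, ∃ i < cyclicGap T t, t + i = y := by
  have hex : ∃ i : ℕ, y - i ∈ T := by
    obtain ⟨t, ht⟩ := hT
    exact ⟨(y - t).val, by simpa using ht⟩
  -- `t := y - i` with `i` least is the last element of `T` at or before `y`.
  refine ⟨y - Nat.find hex, Nat.find_spec hex, Nat.find hex, ?_, sub_add_cancel _ _⟩
  by_contra! hle
  obtain ⟨hpos, hmem⟩ := cyclicGap_spec (Nat.find_spec hex)
  refine Nat.find_min hex (m := Nat.find hex - cyclicGap T (y - Nat.find hex)) (by omega) ?_
  rw [Nat.cast_sub hle]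
  convert hmem using 1
  ring

theorem le_sum_cyclicGap (hT : T.Nonempty) : M ≤ ∑ t ∈ T, cyclicGap T t := by
  have hcover : (univ : Finset (ZMod M)) ⊆
      T.biUnion fun t => (range (cyclicGap T t)).image fun i : ℕ => t + (i : ZMod M) := by
    intro y _
    obtain ⟨t, ht, i, hi, rfl⟩ := exists_add_eq_of_lt_cyclicGap hT y
    exact mem_biUnion.mpr ⟨t, ht, mem_image.mpr ⟨i, mem_range.mpr hi, rfl⟩⟩
  calc M = #(univ : Finset (ZMod M)) := by rw [card_univ, ZMod.card]
    _ ≤ _ := card_le_card hcover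
    _ ≤ _ := card_biUnion_le
    _ ≤ _ := sum_le_sum fun t _ => card_image_le.trans (card_range _).le

theorem _root_.IsSidonSet.injOn_cyclicGap (hT : IsSidonSet T) : Set.InjOn (cyclicGap T) T := by
  intro t ht t' ht' htt'
  obtain ⟨hpos, hmem⟩ := cyclicGap_spec ht
  obtain ⟨-, hmem'⟩ := cyclicGap_spec ht'
  rw [← htt'] at hmem'
  rcases hT _ hmem _ ht' _ hmem' _ ht (by ring) with ⟨-, h⟩ | ⟨h, -⟩
  · exact h.symm
  · by_contra hne
    have hdvd : M ∣ cyclicGap T t := (natCast_eq_zero_iff _ _).mp (by simpa using h)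
    exact (Nat.eq_zero_of_dvd_of_lt hdvd (cyclicGap_lt ht' (Ne.symm hne))).not_gt hpos

-- Otherwise `x` would lie strictly inside the gap after `t`.
theorem val_sub_add_cyclicGap_le (hx : x ∈ T) :
    (x - (t + cyclicGap T t)).val + cyclicGap T t ≤ M := by
  set g := cyclicGap T t
  set d := (x - (t + g)).val
  by_contra! h
  have hlt : d < M := val_lt _
  refine add_notMem_of_lt_cyclicGap (T := T) (t := t) (d := d + g - M) (by omega) (by omega) ?_
  rw [Nat.cast_sub h.le, Nat.cast_add, natCast_self, natCast_zmod_val, sub_zero]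
  convert hx using 1
  ring

end ZMod

theorem exists_full_intervalSidon_of_gap_bound_general (M : ℕ) (hM : 0 < M)
    (S : Finset ℤ) (hSne : S.Nonempty) (hS : IsSidonMod (M : ℤ) S)
    (N : ℕ)
    (hthr : N ≥ M - (M + S.card * (S.card - 1) / 2) / S.card + 1) :
    ∃ A : Finset ℤ, A ⊆ Finset.Icc (1 : ℤ) N ∧ IsSidon A ∧
      A.card = S.card := by
  have : NeZero M := ⟨hM.ne'⟩
  set T := S.image (Int.cast : ℤ → ZMod M)
  have hTcard : #T = #S := card_image_of_injOn hS.injOn_intCast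
  have hgap := hS.isSidonSet_image_intCast.injOn_cyclicGap
  have hTne : T.Nonempty := hSne.image _
  obtain ⟨b, hg, hbig⟩ := exists_div_le_of_le_sum (m := M) (hTne.image (ZMod.cyclicGap T))
    (by rw [sum_image hgap]; exact ZMod.le_sum_cyclicGap hTne)
  obtain ⟨t, -, rfl⟩ := mem_image.mp hg
  rw [card_image_of_injOn hgap, hTcard] at hbig
  set w := t + ZMod.cyclicGap T t with hw
  have hf : ∀ x : ℤ, (((((x : ZMod M) - w).val : ℤ) + 1 : ℤ) : ZMod M) = x + (1 - w) := by
    intro x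
    push_cast [ZMod.natCast_zmod_val]
    ring
  refine ⟨S.image fun x : ℤ => (((x : ZMod M) - w).val : ℤ) + 1, ?_,
    (hS.image_of_intCast_eq_add hf).isSidon_s8, hS.card_image_of_intCast_eq_add hf⟩
  simp only [subset_iff, forall_mem_image, mem_Icc]
  intro x hx
  have hwindow := ZMod.val_sub_add_cyclicGap_le (T := T) (t := t) (mem_image_of_mem Int.cast hx)
  rw [← hw] at hwindow
  omega

/-- Quantitative full transfer: if `S` is nonempty and Sidon modulo `M`,
`s = |S|`, and `0 < N ≤ M` with
`N ≥ M - (M + s*(s-1)/2)/s + 1` (floor divisions), then there is an interval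
Sidon set `A ⊆ {1, …, N}` with `|A| = s`. -/
theorem exists_full_intervalSidon_of_gap_bound (M : ℕ) (hM : 0 < M)
    (S : Finset ℤ) (hSne : S.Nonempty) (hS : IsSidonMod (M : ℤ) S)
    (N : ℕ) (hN : 0 < N) (hNM : N ≤ M)
    (hthr : N ≥ M - (M + S.card * (S.card - 1) / 2) / S.card + 1) :
    ∃ A : Finset ℤ, A ⊆ Finset.Icc (1 : ℤ) N ∧ IsSidon A ∧
      A.card = S.card :=
  exists_full_intervalSidon_of_gap_bound_general M hM S hSne hS N hthr
end

section
/- For every integer N ≥ 1, h(N) ≤ √(2N) + 1 (as an inequality of real numbers). -/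
open Classical in
/-- `sidonMax N` is the maximum cardinality of a Sidon subset of `{1, …, N}`. -/
noncomputable def sidonMax (N : ℕ) : ℕ :=
  ((Finset.Icc (1 : ℤ) N).powerset.filter fun A => IsSidon A).sup Finset.card

open Finset

namespace IsSidon

variable {A : Finset ℤ}

theorem injOn_sub_offDiag (hA : IsSidon A) :
    Set.InjOn (fun p : ℤ × ℤ => p.1 - p.2) A.offDiag := by
  rintro ⟨a, b⟩ hab ⟨c, d⟩ hcd h
  simp only [coe_offDiag, Set.mem_offDiag] at hab hcd
  obtain ⟨ha, hb, hne⟩ := hab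
  obtain ⟨hc, hd, -⟩ := hcd
  rcases hA a ha d hd c hc b hb (by linarith) with ⟨rfl, rfl⟩ | ⟨rfl, -⟩
  · rfl
  · exact absurd rfl hne

theorem card_offDiag_le_of_subset_Icc (hA : IsSidon A) {a b : ℤ} (hsub : A ⊆ Icc a b) :
    #A.offDiag ≤ 2 * (b - a).toNat := by
  have hmaps : ∀ p ∈ A.offDiag, p.1 - p.2 ∈ Icc (a - b) (-1) ∪ Icc 1 (b - a) := by
    rintro ⟨x, y⟩ hp
    obtain ⟨hx, hy, hne⟩ := mem_offDiag.mp hp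
    have := mem_Icc.mp (hsub hx)
    have := mem_Icc.mp (hsub hy)
    simp only [mem_union, mem_Icc]
    omega
  calc #A.offDiag
      ≤ #(Icc (a - b) (-1) ∪ Icc 1 (b - a)) := card_le_card_of_injOn _ hmaps hA.injOn_sub_offDiag
    _ ≤ #(Icc (a - b) (-1)) + #(Icc 1 (b - a)) := card_union_le _ _
    _ = 2 * (b - a).toNat := by simp only [Int.card_Icc]; omega

theorem card_sub_one_sq_le (hA : IsSidon A) {N : ℕ} (hsub : A ⊆ Icc 1 (N : ℤ)) :
    (#A - 1) ^ 2 ≤ 2 * N := by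
  have hoff := hA.card_offDiag_le_of_subset_Icc hsub
  rw [offDiag_card] at hoff
  calc (#A - 1) ^ 2 ≤ #A * (#A - 1) := by rw [sq]; exact Nat.mul_le_mul_right _ (Nat.sub_le _ _)
    _ = #A * #A - #A := Nat.mul_sub_one _ _
    _ ≤ 2 * N := by omega

theorem card_le_sqrt_two_mul_add_one (hA : IsSidon A) {N : ℕ} (hsub : A ⊆ Icc 1 (N : ℤ)) :
    (#A : ℝ) ≤ √(2 * N) + 1 := by
  have hsq : (((#A - 1 : ℕ) : ℝ)) ^ 2 ≤ 2 * N := by exact_mod_cast hA.card_sub_one_sq_le hsub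
  calc (#A : ℝ) ≤ ((#A - 1 : ℕ) : ℝ) + 1 := by norm_cast; omega
    _ ≤ √(2 * N) + 1 := by gcongr; exact Real.le_sqrt_of_sq_le hsq

end IsSidon

theorem exists_isSidon_card_eq_sidonMax (N : ℕ) :
    ∃ A ⊆ Icc (1 : ℤ) N, IsSidon A ∧ #A = sidonMax N := by
  classical
  have hne : ((Icc (1 : ℤ) N).powerset.filter fun A => IsSidon A).Nonempty :=
    ⟨∅, mem_filter.mpr ⟨empty_mem_powerset _, by simp [IsSidon]⟩⟩
  obtain ⟨A, hA, hcard⟩ := exists_mem_eq_sup _ hne card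
  rw [mem_filter, mem_powerset] at hA
  exact ⟨A, hA.1, hA.2, by rw [sidonMax, hcard]⟩

theorem sidonMax_le_sqrt_two_general (N : ℕ) :
    (sidonMax N : ℝ) ≤ Real.sqrt (2 * N) + 1 := by
  obtain ⟨A, hsub, hA, hcard⟩ := exists_isSidon_card_eq_sidonMax N
  rw [← hcard]
  exact hA.card_le_sqrt_two_mul_add_one hsub

/-- Pair-difference upper bound: `h(N) ≤ √(2N) + 1` for `N ≥ 1`. -/
theorem sidonMax_le_sqrt_two (N : ℕ) (hN : 1 ≤ N) :
    (sidonMax N : ℝ) ≤ Real.sqrt (2 * N) + 1 :=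
  sidonMax_le_sqrt_two_general N
end

section
/- For every integer N ≥ 16, h(N) ≤ ⌊√N⌋ + ⌊√(⌊√N⌋)⌋ + 2, where ⌊√·⌋ denotes the natural-number integer square root. -/
/-
Lindström's argument. List a Sidon set `A ⊆ [1, N]` as `a₀ < ⋯ < a_{K-1}` and fix `m ≤ K`.
The differences `a_{i+d} - a_i` with `1 ≤ d ≤ m` are distinct positive integers, since
`a_{i+d} - a_i = a_{i'+d'} - a_{i'}` is a coincidence of sums `a_{i+d} + a_{i'} = a_{i'+d'} + a_i`.
There are `T = m(2K - m - 1)/2` of them, so they sum to at least `T(T + 1)/2`. For fixed `d`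
their sum telescopes to (sum of the top `d` elements) - (sum of the bottom `d`) `≤ d(N - 1)`,
so `T(T + 1) ≤ (N - 1)m(m + 1)`. With `s = ⌊√N⌋`, `t = ⌊√s⌋`, `K = s + t + 3` and `m = t + 1`
this inequality fails.
-/

open Finset

lemma IsSidon.mono {A B : Finset ℤ} (hA : IsSidon A) (hBA : B ⊆ A) : IsSidon B :=
  fun a ha b hb c hc d hd ↦ hA a (hBA ha) b (hBA hb) c (hBA hc) d (hBA hd)

lemma IsSidon.eq_of_sub_eq {A : Finset ℤ} (hA : IsSidon A) {a b c d : ℤ} (ha : a ∈ A)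
    (hb : b ∈ A) (hc : c ∈ A) (hd : d ∈ A) (hab : a < b) (h : b - a = d - c) :
    a = c ∧ b = d := by
  rcases hA b hb c hc d hd a ha (by linarith) with ⟨rfl, rfl⟩ | ⟨rfl, rfl⟩
  · exact ⟨rfl, rfl⟩
  · exact absurd hab (lt_irrefl _)

lemma Finset.card_mul_card_add_one_le_two_mul_sum {B : Finset ℤ} (hB : ∀ x ∈ B, 0 < x) :
    (#B : ℤ) * (#B + 1) ≤ 2 * ∑ x ∈ B, x := by
  induction B using Finset.induction_on_max with
  | empty => simp
  | insert a B hlt ih =>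
    have ha : 0 < a := hB a (mem_insert_self a B)
    have hcard : (#B : ℤ) + 1 ≤ a := by
      have hsub : B ⊆ Ioo 0 a := fun x hx ↦ mem_Ioo.2 ⟨hB x (mem_insert_of_mem hx), hlt x hx⟩
      have hle := card_le_card hsub
      zify at hle
      rw [Int.card_Ioo_of_lt _ _ ha] at hle
      linarith
    have ih := ih fun x hx ↦ hB x (mem_insert_of_mem hx)
    rw [card_insert_of_notMem fun h ↦ (hlt a h).false, sum_insert fun h ↦ (hlt a h).false]
    push_cast
    nlinarith

lemma Finset.sum_range_shift_sub_comm {M : Type*} [AddCommGroup M] (f : ℕ → M) (c d : ℕ) :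
    ∑ i ∈ range c, (f (d + i) - f i) = ∑ i ∈ range d, (f (c + i) - f i) := by
  have h₁ := sum_range_add f c d
  have h₂ := sum_range_add f d c
  rw [add_comm d c] at h₂
  rw [sum_sub_distrib, sum_sub_distrib, sub_eq_sub_iff_add_eq_add, add_comm, ← h₂, h₁, add_comm]

lemma two_mul_sum_range_succ (m : ℕ) : 2 * ∑ j ∈ range m, ((j : ℤ) + 1) = m * (m + 1) := by
  induction m with
  | zero => simp
  | succ m ih => rw [sum_range_succ, mul_add, ih]; push_cast; ring

lemma Finset.exists_strictMonoOn_enum {α : Type*} [LinearOrder α] [Inhabited α] (s : Finset α) :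
    ∃ g : ℕ → α, StrictMonoOn g (Set.Iio #s) ∧ ∀ i < #s, g i ∈ s := by
  refine ⟨fun i ↦ if h : i < #s then s.orderEmbOfFin rfl ⟨i, h⟩ else default, ?_, ?_⟩
  · intro i hi j hj hij
    simp only [dif_pos (Set.mem_Iio.1 hi), dif_pos (Set.mem_Iio.1 hj)]
    exact (s.orderEmbOfFin rfl).strictMono (Fin.mk_lt_mk.2 hij)
  · intro i hi
    simp only [dif_pos hi]
    exact s.orderEmbOfFin_mem rfl _

/-- `⟨j, i⟩ ∈ gapPairs K m` encodes the index pair `i < j + 1 + i < K` with gap at most `m`. -/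
def gapPairs (K m : ℕ) : Finset (Σ _ : ℕ, ℕ) :=
  (range m).sigma fun j ↦ range (K - (j + 1))

lemma two_mul_card_gapPairs {K m : ℕ} (hm : m ≤ K) :
    2 * (#(gapPairs K m) : ℤ) = m * (2 * K - m - 1) := by
  have hsum : (#(gapPairs K m) : ℤ) = ∑ j ∈ range m, ((K : ℤ) - (j + 1)) := by
    rw [gapPairs, card_sigma, Nat.cast_sum]
    refine sum_congr rfl fun j hj ↦ ?_
    rw [card_range, Nat.cast_sub (by simp at hj; omega)]
    push_cast; ring
  rw [hsum, sum_sub_distrib, mul_sub, two_mul_sum_range_succ, sum_const, card_range, nsmul_eq_mul]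
  ring

section Differences

variable {K : ℕ} {g : ℕ → ℤ}

lemma sum_range_sub_le {N : ℤ} (hgN : ∀ i < K, g i ∈ Icc 1 N) {d : ℕ} (hd : d ≤ K) :
    ∑ i ∈ range (K - d), (g (d + i) - g i) ≤ d * (N - 1) := by
  rw [sum_range_shift_sub_comm]
  calc ∑ i ∈ range d, (g (K - d + i) - g i) ≤ ∑ _i ∈ range d, (N - 1) := by
        refine sum_le_sum fun i hi ↦ ?_
        have hi : i < d := mem_range.1 hi
        have h₁ := (mem_Icc.1 (hgN (K - d + i) (by omega))).2
        have h₂ := (mem_Icc.1 (hgN i (by omega))).1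
        linarith
    _ = d * (N - 1) := by simp [mul_sub]

lemma two_mul_sum_gapPairs_le {N : ℤ} (hgN : ∀ i < K, g i ∈ Icc 1 N) {m : ℕ} (hm : m ≤ K) :
    2 * ∑ p ∈ gapPairs K m, (g (p.1 + 1 + p.2) - g p.2) ≤ (N - 1) * (m * (m + 1)) := by
  calc 2 * ∑ p ∈ gapPairs K m, (g (p.1 + 1 + p.2) - g p.2)
      ≤ 2 * ∑ j ∈ range m, ((j : ℤ) + 1) * (N - 1) := by
        rw [gapPairs, sum_sigma]
        gcongr with j hj
        exact_mod_cast sum_range_sub_le hgN (by simp at hj; omega)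
    _ = (N - 1) * (m * (m + 1)) := by
        rw [← sum_mul, ← two_mul_sum_range_succ]; ring

lemma injOn_gapPairs_sub {A : Finset ℤ} (hA : IsSidon A) (hg : StrictMonoOn g (Set.Iio K))
    (hgA : ∀ i < K, g i ∈ A) (m : ℕ) :
    Set.InjOn (fun p : Σ _ : ℕ, ℕ ↦ g (p.1 + 1 + p.2) - g p.2) (gapPairs K m) := by
  rintro ⟨j, i⟩ hp ⟨j', i'⟩ hq h
  simp only [gapPairs, coe_sigma, Set.mem_sigma_iff, coe_range, Set.mem_Iio] at hp hq h
  obtain ⟨hlow, hhigh⟩ := hA.eq_of_sub_eq (hgA _ (by omega)) (hgA _ (by omega))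
    (hgA _ (by omega)) (hgA _ (by omega)) (hg (by simp; omega) (by simp; omega) (by omega)) h
  obtain rfl : i = i' := hg.injOn (by simp; omega) (by simp; omega) hlow
  have hhigh := hg.injOn (by simp; omega) (by simp; omega) hhigh
  obtain rfl : j = j' := by omega
  rfl

end Differences

theorem IsSidon.lindstrom {A : Finset ℤ} (hA : IsSidon A) {N : ℤ} (hAN : A ⊆ Icc 1 N) {m : ℕ}
    (hm : m ≤ #A) :
    m * (2 * #A - m - 1) * (m * (2 * #A - m - 1) + 2) ≤ 4 * (N - 1) * (m * (m + 1)) := by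
  obtain ⟨g, hg, hgA⟩ := A.exists_strictMonoOn_enum
  set φ : (Σ _ : ℕ, ℕ) → ℤ := fun p ↦ g (p.1 + 1 + p.2) - g p.2
  set P := gapPairs #A m
  have hinj : Set.InjOn φ P := injOn_gapPairs_sub hA hg hgA m
  have hpos : ∀ x ∈ P.image φ, 0 < x := by
    simp only [mem_image, P, gapPairs, mem_sigma, mem_range]
    rintro _ ⟨⟨j, i⟩, ⟨hj, hi⟩, rfl⟩
    dsimp only at hj hi
    exact sub_pos.2 (hg (by simp; omega) (by simp; omega) (by omega))
  have hlower : (#P : ℤ) * (#P + 1) ≤ 2 * ∑ p ∈ P, φ p := by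
    simpa [card_image_of_injOn hinj, sum_image hinj] using card_mul_card_add_one_le_two_mul_sum hpos
  have hupper := two_mul_sum_gapPairs_le (fun i hi ↦ hAN (hgA i hi)) hm
  rw [← two_mul_card_gapPairs hm]
  nlinarith

lemma lindstrom_bound_lt {N s t K m : ℤ} (ht : 0 ≤ t) (hts : t ^ 2 ≤ s) (hst : s < (t + 1) ^ 2)
    (hN : N < (s + 1) ^ 2) (hm : m = t + 1) (hK : K = s + t + 3) :
    4 * (N - 1) * (m * (m + 1)) < m * (2 * K - m - 1) * (m * (2 * K - m - 1) + 2) := by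
  subst hm hK
  have hs : 0 ≤ s := by nlinarith
  have hN' : N - 1 ≤ s * s + 2 * s - 1 := by nlinarith
  -- with `X = (t + 1)(2s + t + 4)`, one has
  -- `X² - 4(s² + 2s - 1)(t + 1)(t + 2) = (t + 1)(4s(t² + 3t - s) + (t + 1)(t + 4)² + 4t + 8)`
  have key : 4 * (s * s + 2 * s - 1) * ((t + 1) * (t + 2)) < ((t + 1) * (2 * s + t + 4)) ^ 2 := by
    have hgap : 0 ≤ s * (t ^ 2 + 3 * t - s) := mul_nonneg hs (by nlinarith)
    nlinarith [mul_nonneg (by linarith : (0 : ℤ) ≤ t + 1) hgap]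
  nlinarith [mul_le_mul_of_nonneg_right hN' (by positivity : (0 : ℤ) ≤ (t + 1) * (t + 2))]

theorem sidonMax_le_lindstrom_general (N : ℕ) :
    sidonMax N ≤ Nat.sqrt N + Nat.sqrt (Nat.sqrt N) + 2 := by
  classical
  set s := Nat.sqrt N
  set t := Nat.sqrt s
  refine Finset.sup_le fun A hA ↦ ?_
  obtain ⟨hAN, hA⟩ := by simpa only [mem_filter, mem_powerset] using hA
  by_contra! hcard
  obtain ⟨B, hBA, hB⟩ := exists_subset_card_eq hcard
  have hlin := (hA.mono hBA).lindstrom (hBA.trans hAN) (m := t + 1) (by omega)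
  have hfail := lindstrom_bound_lt (N := N) (s := s) (t := t) (K := #B) (m := (t + 1 : ℕ))
    (by positivity) (by exact_mod_cast Nat.sqrt_le' s) (by exact_mod_cast Nat.lt_succ_sqrt' s)
    (by exact_mod_cast Nat.lt_succ_sqrt' N) (Nat.cast_succ t) (by rw [hB]; push_cast; ring)
  exact hfail.not_ge hlin

/-- Johnson-route shift-incidence upper bound: for `N ≥ 16`,
`h(N) ≤ ⌊√N⌋ + ⌊√⌊√N⌋⌋ + 2`. -/
theorem sidonMax_le_lindstrom (N : ℕ) (hN : 16 ≤ N) :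
    sidonMax N ≤ Nat.sqrt N + Nat.sqrt (Nat.sqrt N) + 2 :=
  sidonMax_le_lindstrom_general N
end

section
/- For every integer N ≥ 5, h(N) > ⌊(⌊√N⌋ + 1) / 2⌋, where ⌊√·⌋ denotes the natural-number integer square root and the outer division is natural-number (floor) division. -/
open Finset

theorem isSidon_image {α : Type*} (s : Finset α) (f : α → ℤ)
    (hf : ∀ a ∈ s, ∀ b ∈ s, ∀ c ∈ s, ∀ d ∈ s,
      f a + f b = f c + f d → (a = c ∧ b = d) ∨ (a = d ∧ b = c)) :
    IsSidon (s.image f) := by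
  simp only [IsSidon, mem_image]
  rintro _ ⟨a, ha, rfl⟩ _ ⟨b, hb, rfl⟩ _ ⟨c, hc, rfl⟩ _ ⟨d, hd, rfl⟩ h
  rcases hf a ha b hb c hc d hd h with ⟨rfl, rfl⟩ | ⟨rfl, rfl⟩
  · exact .inl ⟨rfl, rfl⟩
  · exact .inr ⟨rfl, rfl⟩

theorem card_le_sidonMax {N : ℕ} {S : Finset ℤ} (hS : S ⊆ Icc 1 (N : ℤ)) (hSidon : IsSidon S) :
    #S ≤ sidonMax N :=
  le_sup (f := card) (by simpa using ⟨hS, hSidon⟩)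

theorem sidonMax_mono : Monotone sidonMax := fun M N hMN => by
  classical
  exact sup_mono <| filter_subset_filter _ <| powerset_mono.mpr <|
    Icc_subset_Icc_right (by exact_mod_cast hMN)

theorem eq_and_eq_or_eq_and_eq_of_add_algebraMap_mul_eq {K L : Type*} [Field K] [CommRing L]
    [Nontrivial L] [Algebra K L] {θ : L} (hθ : θ ∉ Set.range (algebraMap K L)) {a b c d : K}
    (h : (θ + algebraMap K L a) * (θ + algebraMap K L b) =
      (θ + algebraMap K L c) * (θ + algebraMap K L d)) :
    (a = c ∧ b = d) ∨ (a = d ∧ b = c) := by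
  have hsum : a + b = c + d := by
    by_contra hne
    have hne' : a + b - (c + d) ≠ 0 := sub_ne_zero.mpr hne
    have hlin : algebraMap K L (a + b - (c + d)) * θ = algebraMap K L (c * d - a * b) := by
      simp only [map_sub, map_add, map_mul]
      linear_combination h
    refine hθ ⟨(a + b - (c + d))⁻¹ * (c * d - a * b), ?_⟩
    rw [map_mul, ← hlin, ← mul_assoc, ← map_mul, inv_mul_cancel₀ hne', map_one, one_mul]
  have hprod : a * b = c * d := (algebraMap K L).injective <| by
    have hsum' := congrArg (algebraMap K L) hsum
    simp only [map_add] at hsum'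
    simp only [map_mul]
    linear_combination h - θ * hsum'
  have hroots : (a - c) * (a - d) = 0 := by linear_combination a * hsum - hprod
  rcases mul_eq_zero.mp hroots with hac | had
  · exact .inl ⟨sub_eq_zero.mp hac, by linear_combination hsum - hac⟩
  · exact .inr ⟨sub_eq_zero.mp had, by linear_combination hsum - had⟩

theorem FiniteField.exists_pow_eq_of_ne_zero (F : Type*) [Field F] [Finite F] :
    ∃ g : F, ∀ x : F, x ≠ 0 → ∃ n < Nat.card F - 1, g ^ n = x := by
  classical
  obtain ⟨g, hg⟩ := IsCyclic.exists_generator (α := Fˣ)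
  have hord : orderOf g = Nat.card F - 1 := by
    rw [orderOf_eq_card_of_forall_mem_zpowers hg, Nat.card_units]
  refine ⟨g, fun x hx => ?_⟩
  obtain ⟨n, hn, hgn⟩ := mem_image.mp (mem_zpowers_iff_mem_range_orderOf.mp (hg (Units.mk0 x hx)))
  exact ⟨n, hord ▸ mem_range.mp hn, by simpa using congrArg Units.val hgn⟩

theorem le_sidonMax_sq_sub_one (p : ℕ) [Fact p.Prime] : p ≤ sidonMax (p ^ 2 - 1) := by
  classical
  let F := GaloisField p 2
  have hcard : Nat.card F = p ^ 2 := GaloisField.card p 2 two_ne_zero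
  obtain ⟨θ, hθ⟩ : ∃ θ : F, θ ∉ Set.range (algebraMap (ZMod p) F) := by
    by_contra! hsurj
    have := Nat.card_le_card_of_surjective _ hsurj
    rw [hcard, Nat.card_zmod] at this
    nlinarith [(Fact.out : p.Prime).two_le]
  have hne : ∀ c : ZMod p, θ + algebraMap (ZMod p) F c ≠ 0 := fun c h =>
    hθ ⟨-c, by rw [map_neg]; linear_combination -h⟩
  obtain ⟨g, hg⟩ := FiniteField.exists_pow_eq_of_ne_zero F
  choose e he_lt he using fun c => hg _ (hne c)
  have he_inj : Function.Injective e := fun a b hab =>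
    (algebraMap (ZMod p) F).injective <| add_left_cancel <| (he a).symm.trans (hab ▸ he b)
  set S : Finset ℤ := univ.image fun c => (e c : ℤ) + 1
  have hSidon : IsSidon S := by
    refine isSidon_image _ _ fun a _ b _ c _ d _ hsum => ?_
    apply eq_and_eq_or_eq_and_eq_of_add_algebraMap_mul_eq hθ
    rw [← he, ← he, ← he, ← he, ← pow_add, ← pow_add]
    congr 1
    omega
  have hsub : S ⊆ Icc 1 ((p ^ 2 - 1 : ℕ) : ℤ) := by
    intro z hz
    obtain ⟨c, -, rfl⟩ := mem_image.mp hz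
    have := he_lt c
    rw [mem_Icc]
    omega
  calc p = #S := by
        rw [card_image_of_injective _ fun a b hab => he_inj (by simpa using hab), card_univ,
          ZMod.card]
    _ ≤ sidonMax (p ^ 2 - 1) := card_le_sidonMax hsub hSidon

theorem exists_prime_half_lt_and_le (s : ℕ) (hs : 2 ≤ s) :
    ∃ p, p.Prime ∧ (s + 1) / 2 < p ∧ p ≤ s := by
  obtain ⟨p, hp, hlt, hle⟩ := Nat.exists_prime_lt_and_le_two_mul ((s + 1) / 2) (by omega)
  refine ⟨p, hp, hlt, ?_⟩
  by_contra! hgt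
  -- then `p = s + 1 = 2 ((s + 1) / 2)` is even
  have hp2 : p = 2 := hp.even_iff.mp ⟨(s + 1) / 2, by omega⟩
  omega

/-- Singer-via-Bertrand lower bound: for `N ≥ 5`,
`h(N) > ⌊(⌊√N⌋ + 1) / 2⌋`. -/
theorem sidonMax_gt_sqrt_div_two (N : ℕ) (hN : 5 ≤ N) :
    sidonMax N > (Nat.sqrt N + 1) / 2 := by
  obtain ⟨p, hp, hlt, hle⟩ := exists_prime_half_lt_and_le (Nat.sqrt N) (Nat.le_sqrt.mpr (by omega))
  have := Fact.mk hp
  have hpN : p ^ 2 - 1 ≤ N := by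
    have := Nat.sqrt_le' N
    have := Nat.pow_le_pow_left hle 2
    omega
  calc (Nat.sqrt N + 1) / 2 < p := hlt
    _ ≤ sidonMax (p ^ 2 - 1) := le_sidonMax_sq_sub_one p
    _ ≤ sidonMax N := sidonMax_mono hpN
end
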